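/- Exactness of the reduced model under equal time constants: consider the full (|G|+1)-dimensional system ẋ = Ax + Bu with x = (Δω, P^m) where A has first row (−D_eff/M_eff, 1ᵀ/M_eff) and remaining rows given by Ṗ^m = −T⁻¹ P^m − T⁻¹ R_G Δω + T⁻¹ P^r with T = diag(τ₁,…,τ_{|G|}). If τ_g = τ̄ for all g, then the pair (Δω(t), Σ_g P^m_g(t)) satisfies the reduced two-dimensional dynamics: d/dt Δω = (−D_eff Δω + Σ_g P^m_g + P_load)/M_eff and d/dt (Σ_g P^m_g) = (−Σ_g P^m_g − (Σ_g R_{G,g}) Δω + Σ_g P^r_g)/τ̄. Consequently, if Δω_red(0) = Δω(0) and P^m_red(0) = Σ_g P^m_g(0), then Δω_red(t) = Δω(t) for all t ≥ 0. -/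

import Mathlib

/-!
With a common time constant `τ̄` the governor equations are linear with the same left-hand
operator, so summing them over `g` closes up into a single equation for `Σ_g P^m_g`. Hence
`(Δω, Σ_g P^m_g)` solves the reduced system, whose right-hand side is affine and therefore
globally Lipschitz; by uniqueness of solutions it coincides with `(Δω_red, P^m_red)`.
-/

open scoped BigOperators

theorem hasDerivAt_sum_of_common_time_constant {ι : Type*} [Fintype ι] {τ t : ℝ}
    {w : ℝ → ℝ} {r p : ι → ℝ} {x : ℝ → ι → ℝ}
    (hx : ∀ i, HasDerivAt (fun s => x s i) ((-(x t i) - r i * w t + p i) / τ) t) :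
    HasDerivAt (fun s => ∑ i, x s i) ((-(∑ i, x t i) - (∑ i, r i) * w t + ∑ i, p i) / τ) t := by
  refine (HasDerivAt.fun_sum fun i _ => hx i).congr_deriv ?_
  rw [← Finset.sum_div, Finset.sum_add_distrib, Finset.sum_sub_distrib, Finset.sum_neg_distrib,
    Finset.sum_mul]

/-- The right-hand side `A_red x + B_red u_red` of the reduced model, with `S = Σ_g R_{G,g}` and
`Q = Σ_g P^r_g`. -/
noncomputable def reducedField (M D τ S P Q : ℝ) (x : ℝ × ℝ) : ℝ × ℝ :=
  ((-D * x.1 + x.2 + P) / M, (-x.2 - S * x.1 + Q) / τ)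

theorem lipschitzWith_reducedField (M D τ S P Q : ℝ) :
    ∃ K, LipschitzWith K (reducedField M D τ S P Q) := by
  open ContinuousLinearMap in
  let A : ℝ × ℝ →L[ℝ] ℝ × ℝ :=
    ((-D / M) • fst ℝ ℝ ℝ + M⁻¹ • snd ℝ ℝ ℝ).prod ((-S / τ) • fst ℝ ℝ ℝ + (-τ⁻¹) • snd ℝ ℝ ℝ)
  have hA : reducedField M D τ S P Q = fun x => A x + (P / M, Q / τ) := by
    funext x
    simp only [reducedField, A, prod_apply, add_apply, smul_apply, coe_fst',
      coe_snd', smul_eq_mul, Prod.mk_add_mk]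
    congr 1 <;> ring
  exact ⟨_, hA ▸ A.lipschitz.add (LipschitzWith.const _)⟩

theorem stmt_8_general {G : ℕ} (Meff Deff τbar Pload : ℝ)
    (R Pr : Fin G → ℝ)
    (Δω : ℝ → ℝ) (Pm : ℝ → Fin G → ℝ)
    (hΔω : ∀ t, HasDerivAt Δω
      ((-Deff * Δω t + (∑ g, Pm t g) + Pload) / Meff) t)
    (hPm : ∀ g, ∀ t, HasDerivAt (fun s => Pm s g)
      ((-(Pm t g) - R g * Δω t + Pr g) / τbar) t)
    (ωred Pred : ℝ → ℝ)
    (hωred : ∀ t, HasDerivAt ωred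
      ((-Deff * ωred t + Pred t + Pload) / Meff) t)
    (hPred : ∀ t, HasDerivAt Pred
      ((-(Pred t) - (∑ g, R g) * ωred t + (∑ g, Pr g)) / τbar) t)
    (h0ω : ωred 0 = Δω 0) (h0P : Pred 0 = ∑ g, Pm 0 g) :
    (∀ t, HasDerivAt (fun s => ∑ g, Pm s g)
        ((-(∑ g, Pm t g) - (∑ g, R g) * Δω t + (∑ g, Pr g)) / τbar) t)
      ∧ ∀ t : ℝ, 0 ≤ t → ωred t = Δω t := by
  have hsum := fun t => hasDerivAt_sum_of_common_time_constant (hPm · t)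
  refine ⟨hsum, fun t _ => ?_⟩
  obtain ⟨K, hK⟩ := lipschitzWith_reducedField Meff Deff τbar (∑ g, R g) Pload (∑ g, Pr g)
  have hred_eq_full : (fun s => (ωred s, Pred s)) = fun s => (Δω s, ∑ g, Pm s g) :=
    ODE_solution_unique_univ (s := fun _ => Set.univ) (t₀ := 0)
      (fun _ => hK.lipschitzOnWith) (fun s => ⟨(hωred s).prodMk (hPred s), trivial⟩)
      (fun s => ⟨(hΔω s).prodMk (hsum s), trivial⟩) (by rw [h0ω, h0P])
  exact congrArg Prod.fst (congrFun hred_eq_full t)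

/-- Exactness of the reduced model under equal turbine time constants. The full system
is `M_eff Δω̇ = -D_eff Δω + Σ_g P^m_g + P_load` and
`τ_g Ṗ^m_g = -P^m_g - R_g Δω + P^r_g` with `τ_g = τ̄` for all `g`. Then the aggregate
pair `(Δω, Σ_g P^m_g)` satisfies the reduced two-dimensional dynamics, and every
solution `(Δω_red, P^m_red)` of the reduced model with matching initial conditions
`Δω_red(0) = Δω(0)`, `P^m_red(0) = Σ_g P^m_g(0)` satisfies `Δω_red(t) = Δω(t)` for all
`t ≥ 0`. -/
theorem stmt_8 {G : ℕ} (Meff Deff τbar Pload : ℝ)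
    (hM : 0 < Meff) (hD : 0 ≤ Deff) (hτ : 0 < τbar)
    (R Pr : Fin G → ℝ)
    (Δω : ℝ → ℝ) (Pm : ℝ → Fin G → ℝ)
    (hΔω : ∀ t, HasDerivAt Δω
      ((-Deff * Δω t + (∑ g, Pm t g) + Pload) / Meff) t)
    (hPm : ∀ g, ∀ t, HasDerivAt (fun s => Pm s g)
      ((-(Pm t g) - R g * Δω t + Pr g) / τbar) t)
    (ωred Pred : ℝ → ℝ)
    (hωred : ∀ t, HasDerivAt ωred
      ((-Deff * ωred t + Pred t + Pload) / Meff) t)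
    (hPred : ∀ t, HasDerivAt Pred
      ((-(Pred t) - (∑ g, R g) * ωred t + (∑ g, Pr g)) / τbar) t)
    (h0ω : ωred 0 = Δω 0) (h0P : Pred 0 = ∑ g, Pm 0 g) :
    (∀ t, HasDerivAt (fun s => ∑ g, Pm s g)
        ((-(∑ g, Pm t g) - (∑ g, R g) * Δω t + (∑ g, Pr g)) / τbar) t)
      ∧ ∀ t : ℝ, 0 ≤ t → ωred t = Δω t :=
  stmt_8_general Meff Deff τbar Pload R Pr Δω Pm hΔω hPm ωred Pred hωred hPred h0ω h0P
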